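/- Let R be a commutative ring and let A be an evolution algebra over R with basis (x_i)_{i∈ι} (ι finite or infinite) and structure coefficients C. Then A is nilpotent — i.e. there exists n ≥ 2 such that every left-normed product ((a_1·a_2)·a_3)⋯·a_n of n elements of A is zero — if and only if there exists n ≥ 2 such that for every sequence of indices i_1, i_2, …, i_n in ι, the product of structure coefficients C(i_n, i_{n-1}) · C(i_{n-1}, i_{n-2}) ⋯ C(i_2, i_1) equals 0 in R. (Theorem 2.4) -/
import Mathlib


/-!
Evolution algebra over a commutative ring `R` with basis `(x_i)_{i ∈ ι}`:
the underlying module is `ι →₀ R` (with `x_i = Finsupp.single i 1`), and the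
structure coefficients are encoded by `Csq : ι → ι →₀ R`, where `Csq i` is the
element `x_i · x_i = ∑_k C(k,i) • x_k`; thus `C k i = Csq i k`.
The product is `(a · b) = ∑_i (a i * b i) • Csq i`, i.e.
`(a · b)(k) = ∑_i a(i) * b(i) * C(k,i)`.
-/
noncomputable def evolMul {R : Type*} [CommRing R] {ι : Type*}
    (Csq : ι → ι →₀ R) (a b : ι →₀ R) : ι →₀ R :=
  a.sum fun i ai => (ai * b i) • Csq i

/-- Left-normed products: `lnp mul f m = ((f 0 · f 1) · f 2) ⋯ · f m`
is the left-normed product of the `m + 1` elements `f 0, …, f m`. -/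
def lnp {A : Type*} (mul : A → A → A) (f : ℕ → A) : ℕ → A
  | 0 => f 0
  | m + 1 => mul (lnp mul f m) (f (m + 1))

section Aux

variable {R : Type*} [CommRing R] {ι : Type*} (Csq : ι → ι →₀ R)

lemma evolMul_single_one (a : ι →₀ R) (j : ι) :
    evolMul Csq a (Finsupp.single j 1) = a j • Csq j := by
  classical
  unfold evolMul
  rw [Finsupp.sum, Finset.sum_eq_single j]
  · simp
  · intro i _ hij
    simp [Finsupp.single_apply, Ne.symm hij]
  · intro hj
    simp [Finsupp.notMem_support_iff.mp hj]

lemma lnp_single (g : ℕ → ι) (m : ℕ) :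
    lnp (evolMul Csq) (fun j => Finsupp.single (g (j - 1)) 1) (m + 1) =
      (∏ j ∈ Finset.range m, Csq (g j) (g (j + 1))) • Csq (g m) := by
  induction m with
  | zero =>
    show evolMul Csq (Finsupp.single (g 0) 1) (Finsupp.single (g 0) 1) = _
    rw [evolMul_single_one]
    simp
  | succ m ih =>
    show evolMul Csq (lnp (evolMul Csq) _ (m + 1)) (Finsupp.single (g (m + 1)) 1) = _
    rw [ih, evolMul_single_one, Finsupp.smul_apply, smul_eq_mul,
      Finset.prod_range_succ, mul_smul]

lemma evolMul_smul_left (c : R) (a b : ι →₀ R) :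
    evolMul Csq (c • a) b = c • evolMul Csq a b := by
  unfold evolMul
  rw [Finsupp.sum_smul_index (fun i => by simp), Finsupp.smul_sum]
  apply Finsupp.sum_congr
  intro i _
  rw [smul_smul, mul_assoc]

/-- The set of "coefficient-path" elements of length `m`. -/
def pathSet (m : ℕ) : Set (ι →₀ R) :=
  Set.range fun g : ℕ → ι =>
    (∏ j ∈ Finset.range m, Csq (g j) (g (j + 1))) • Csq (g m)

lemma lnp_mem_span (f : ℕ → ι →₀ R) (m : ℕ) :
    lnp (evolMul Csq) f (m + 1) ∈ Submodule.span R (pathSet Csq m) := by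
  induction m with
  | zero =>
    show evolMul Csq (f 0) (f 1) ∈ _
    unfold evolMul
    rw [Finsupp.sum]
    apply Submodule.sum_mem
    intro i _
    exact Submodule.smul_mem _ _ (Submodule.subset_span ⟨fun _ => i, by simp⟩)
  | succ m ih =>
    show evolMul Csq (lnp (evolMul Csq) f (m + 1)) (f (m + 2)) ∈ _
    refine Submodule.span_induction
      (p := fun v _ => evolMul Csq v (f (m + 2)) ∈ Submodule.span R (pathSet Csq (m + 1)))
      ?_ ?_ ?_ ?_ ih
    · rintro v ⟨g, rfl⟩
      rw [evolMul_smul_left]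
      unfold evolMul
      rw [Finsupp.smul_sum, Finsupp.sum]
      apply Submodule.sum_mem
      intro i _
      have key : (∏ j ∈ Finset.range m, Csq (g j) (g (j + 1))) •
          ((Csq (g m) i * f (m + 2) i) • Csq i) =
          f (m + 2) i •
          (((∏ j ∈ Finset.range m, Csq (g j) (g (j + 1))) * Csq (g m) i) • Csq i) := by
        rw [smul_smul, smul_smul]
        congr 1
        ring
      rw [key]
      apply Submodule.smul_mem
      apply Submodule.subset_span
      classical
      refine ⟨Function.update g (m + 1) i, ?_⟩
      beta_reduce
      rw [Finset.prod_range_succ, Function.update_self]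
      congr 2
      · apply Finset.prod_congr rfl
        intro j hj
        have hj' := Finset.mem_range.mp hj
        rw [Function.update_of_ne (by omega), Function.update_of_ne (by omega)]
      · rw [Function.update_of_ne (by omega)]
    · simp [evolMul, Submodule.zero_mem]
    · intro x y _ _ hx hy
      have : evolMul Csq (x + y) (f (m + 2)) =
          evolMul Csq x (f (m + 2)) + evolMul Csq y (f (m + 2)) := by
        unfold evolMul
        apply Finsupp.sum_add_index' (fun i => by simp)
        intro i b₁ b₂
        rw [add_mul, add_smul]
      rw [this]
      exact Submodule.add_mem _ hx hy
    · intro c x _ hx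
      rw [evolMul_smul_left]
      exact Submodule.smul_mem _ _ hx

end Aux

theorem nilpotent_iff_coeff_products_vanish {R : Type*} [CommRing R] {ι : Type*}
    (Csq : ι → ι →₀ R) :
    (∃ n : ℕ, 2 ≤ n ∧ ∀ f : ℕ → (ι →₀ R), lnp (evolMul Csq) f (n - 1) = 0) ↔
    (∃ n : ℕ, 2 ≤ n ∧ ∀ g : ℕ → ι,
      ∏ j ∈ Finset.range (n - 1), Csq (g j) (g (j + 1)) = 0) := by
  constructor
  · rintro ⟨n, hn, hf⟩
    obtain ⟨k, rfl⟩ : ∃ k, n = k + 2 := ⟨n - 2, by omega⟩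
    refine ⟨k + 2, by omega, fun g => ?_⟩
    have h := hf (fun j => Finsupp.single (g (j - 1)) 1)
    have h2 : k + 2 - 1 = k + 1 := rfl
    rw [h2, lnp_single] at h
    have h3 := congrArg (fun v : ι →₀ R => v (g (k + 1))) h
    simp only [Finsupp.smul_apply, smul_eq_mul, Finsupp.coe_zero, Pi.zero_apply] at h3
    rw [show k + 2 - 1 = k + 1 from rfl, Finset.prod_range_succ]
    exact h3
  · rintro ⟨n, hn, hg⟩
    refine ⟨n + 1, by omega, fun f => ?_⟩
    have h1 : n + 1 - 1 = (n - 1) + 1 := by omega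
    rw [h1]
    have hmem := lnp_mem_span Csq f (n - 1)
    have hzero : Submodule.span R (pathSet Csq (n - 1)) ≤ (⊥ : Submodule R (ι →₀ R)) := by
      rw [Submodule.span_le]
      rintro v ⟨g, rfl⟩
      simp [Submodule.mem_bot, hg g]
    simpa using hzero hmem
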